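/- Legendre duality: with E⁻(λ) = ρ + θ/4 - μ_λ/2 for λ ∈ (λ_min, 0) (μ_λ = (1/2)√(θ(θ-8r-4aλ²))) and Δ(γ) = ρ + θ/4 - (1/4)√(a⁻¹(θ-8r)(4γ²+θa)), one has for all λ ∈ (λ_min, 0): E⁻(λ) = sup_{γ>0} {Δ(γ) - γλ}, and the maps γ ↦ λ_γ := -γ√((θ-8r)/(θa²+4aγ²)) from (0,∞) to (λ_min,0) and λ ↦ γ_λ := √(θa²λ²/(θ-8r-4aλ²)) from (λ_min,0) to (0,∞) are mutually inverse bijections. -/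

import Mathlib

noncomputable def lamMin (θ r a : ℝ) : ℝ := -Real.sqrt ((θ - 8*r)/(4*a))
noncomputable def muLam (θ r a l : ℝ) : ℝ := (1/2) * Real.sqrt (θ*(θ - 8*r - 4*a*l^2))
noncomputable def Eminus (θ r a ρ l : ℝ) : ℝ := ρ + θ/4 - muLam θ r a l / 2
noncomputable def DeltaFn (θ r a ρ γ : ℝ) : ℝ :=
  ρ + θ/4 - (1/4) * Real.sqrt (a⁻¹ * (θ - 8*r) * (4*γ^2 + θ*a))
noncomputable def lamGamma (θ r a γ : ℝ) : ℝ :=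
  -γ * Real.sqrt ((θ - 8*r)/(θ*a^2 + 4*a*γ^2))
noncomputable def gamLam (θ r a l : ℝ) : ℝ :=
  Real.sqrt (θ*a^2*l^2/(θ - 8*r - 4*a*l^2))

/-- From membership in the interval, get positivity of the discriminant. -/
lemma aux_hD (θ r a l : ℝ) (ha : 0 < a) (hl : l ∈ Set.Ioo (lamMin θ r a) 0) :
    0 < θ - 8*r - 4*a*l^2 := by
  obtain ⟨h1, h2⟩ := hl
  have hnl : 0 ≤ -l := by linarith
  have h3 : -l < Real.sqrt ((θ - 8*r)/(4*a)) := by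
    simp only [lamMin] at h1; linarith
  have h4 : (-l)^2 < (θ - 8*r)/(4*a) := (Real.lt_sqrt hnl).mp h3
  have h5 : l^2 * (4*a) < θ - 8*r := by
    rw [lt_div_iff₀ (by positivity)] at h4; nlinarith
  nlinarith

/-- Converse: negativity plus discriminant positivity gives membership. -/
lemma aux_mem (θ r a l : ℝ) (ha : 0 < a) (hl0 : l < 0)
    (hD : 0 < θ - 8*r - 4*a*l^2) : l ∈ Set.Ioo (lamMin θ r a) 0 := by
  refine ⟨?_, hl0⟩
  have hnl : 0 ≤ -l := by linarith
  have h4 : (-l)^2 < (θ - 8*r)/(4*a) := by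
    rw [lt_div_iff₀ (by positivity)]; nlinarith
  have h3 : -l < Real.sqrt ((θ - 8*r)/(4*a)) := (Real.lt_sqrt hnl).mpr h4
  simp only [lamMin]; linarith

theorem stmt10 (θ r a ρ : ℝ) (hr : 0 ≤ r) (hθ : 8*r < θ) (ha : 0 < a) (hρ : 0 ≤ ρ) :
    (∀ l ∈ Set.Ioo (lamMin θ r a) 0,
      IsLUB ((fun γ => DeltaFn θ r a ρ γ - γ * l) '' Set.Ioi 0) (Eminus θ r a ρ l)) ∧
    (∀ γ ∈ Set.Ioi (0:ℝ),
      lamGamma θ r a γ ∈ Set.Ioo (lamMin θ r a) 0 ∧ gamLam θ r a (lamGamma θ r a γ) = γ) ∧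
    (∀ l ∈ Set.Ioo (lamMin θ r a) 0,
      gamLam θ r a l ∈ Set.Ioi (0:ℝ) ∧ lamGamma θ r a (gamLam θ r a l) = l) := by
  have hb : 0 < θ - 8*r := by linarith
  have hθ0 : 0 < θ := by linarith
  refine ⟨?_, ?_, ?_⟩
  · -- part 1 : IsLUB
    intro l hl
    have hl0 : l < 0 := hl.2
    have hD : 0 < θ - 8*r - 4*a*l^2 := aux_hD θ r a l ha hl
    set T := Real.sqrt (θ*(θ - 8*r - 4*a*l^2)) with hTdef
    have hT2 : T^2 = θ*(θ - 8*r - 4*a*l^2) := Real.sq_sqrt (by positivity)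
    have hTnn : 0 ≤ T := Real.sqrt_nonneg _
    apply IsGreatest.isLUB
    constructor
    · -- Eminus is attained at γ0 = gamLam
      set γ0 := gamLam θ r a l with hγ0def
      have hargnn : 0 ≤ θ*a^2*l^2/(θ - 8*r - 4*a*l^2) := by positivity
      have hγ0nn : 0 ≤ γ0 := Real.sqrt_nonneg _
      have hγ0pos : 0 < γ0 := by
        rw [hγ0def, gamLam]
        apply Real.sqrt_pos.mpr
        have hlne : l ≠ 0 := ne_of_lt hl0
        positivity
      have hγ0sq : γ0^2 = θ*a^2*l^2/(θ - 8*r - 4*a*l^2) := Real.sq_sqrt hargnn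
      have hγ0T : γ0 * T = -(θ*a*l) := by
        rw [hγ0def, gamLam, hTdef, ← Real.sqrt_mul hargnn]
        have : θ*a^2*l^2/(θ - 8*r - 4*a*l^2) * (θ*(θ - 8*r - 4*a*l^2)) = (θ*a*l)^2 := by
          rw [div_mul_eq_mul_div, div_eq_iff hD.ne']; ring
        rw [this, Real.sqrt_sq_eq_abs,
          abs_of_nonpos (mul_neg_of_pos_of_neg (by positivity : (0:ℝ) < θ*a) hl0).le]
      have hnn : 0 ≤ T - 4*γ0*l := by nlinarith
      have key : a⁻¹ * (θ - 8*r) * (4*γ0^2 + θ*a) = (T - 4*γ0*l)^2 := by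
        have h1 : (T - 4*γ0*l)^2 = T^2 - 8*l*(γ0*T) + 16*γ0^2*l^2 := by ring
        rw [h1, hT2, hγ0T, hγ0sq]
        have hDu : (θ - 8*r - 4*a*l^2) * (θ - 8*r - 4*a*l^2)⁻¹ = 1 := mul_inv_cancel₀ hD.ne'
        have hav : a * a⁻¹ = 1 := mul_inv_cancel₀ ha.ne'
        linear_combination θ*(θ-8*r)*(4*a*l^2*(θ - 8*r - 4*a*l^2)⁻¹+1)*hav + 4*θ*a*l^2*hDu
      refine ⟨γ0, hγ0pos, ?_⟩
      simp only [DeltaFn, Eminus, muLam, ← hTdef]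
      rw [key, Real.sqrt_sq hnn]; ring
    · -- upper bound
      rintro x ⟨γ, hγ, rfl⟩
      simp only [Set.mem_Ioi] at hγ
      have hS : T - 4*γ*l ≤ Real.sqrt (a⁻¹ * (θ - 8*r) * (4*γ^2 + θ*a)) := by
        rw [Real.le_sqrt (by nlinarith) (by positivity)]
        rw [show a⁻¹ * (θ - 8*r) * (4*γ^2 + θ*a) = ((θ - 8*r) * (4*γ^2 + θ*a))/a by
          field_simp]
        rw [le_div_iff₀ ha]
        have hprod : T = Real.sqrt θ * Real.sqrt (θ - 8*r - 4*a*l^2) := by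
          rw [hTdef, Real.sqrt_mul hθ0.le]
        have hsθ : (Real.sqrt θ)^2 = θ := Real.sq_sqrt hθ0.le
        have hsD : (Real.sqrt (θ - 8*r - 4*a*l^2))^2 = θ - 8*r - 4*a*l^2 :=
          Real.sq_sqrt hD.le
        rw [hprod]
        have h1 : a^2*l^2*(Real.sqrt θ)^2 = a^2*l^2*θ := by rw [hsθ]
        have h2 : γ^2*(Real.sqrt (θ - 8*r - 4*a*l^2))^2
            = γ^2*(θ - 8*r - 4*a*l^2) := by rw [hsD]
        have h3 : a*(Real.sqrt θ)^2*(Real.sqrt (θ - 8*r - 4*a*l^2))^2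
            = a*θ*(θ - 8*r - 4*a*l^2) := by rw [hsθ, hsD]
        nlinarith [sq_nonneg (γ * Real.sqrt (θ - 8*r - 4*a*l^2) + a*l*Real.sqrt θ),
          h1, h2, h3]
      simp only [DeltaFn, Eminus, muLam, ← hTdef]
      linarith
  · -- part 2
    intro γ hγ
    simp only [Set.mem_Ioi] at hγ
    set l := lamGamma θ r a γ with hldef
    have hEpos : 0 < θ*a^2 + 4*a*γ^2 := by positivity
    have hspos : 0 < Real.sqrt ((θ - 8*r)/(θ*a^2 + 4*a*γ^2)) :=
      Real.sqrt_pos.mpr (div_pos hb hEpos)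
    have hl0 : l < 0 := by
      rw [hldef, lamGamma]; nlinarith
    have hlsq : l^2 = γ^2 * ((θ - 8*r)/(θ*a^2 + 4*a*γ^2)) := by
      have h1 : l^2 = γ^2 * (Real.sqrt ((θ - 8*r)/(θ*a^2 + 4*a*γ^2)))^2 := by
        rw [hldef, lamGamma]; ring
      rw [h1, Real.sq_sqrt (le_of_lt (div_pos hb hEpos))]
    have hdenom : θ - 8*r - 4*a*l^2 = (θ - 8*r)*(θ*a^2)/(θ*a^2 + 4*a*γ^2) := by
      rw [hlsq]; field_simp; ring
    have hD : 0 < θ - 8*r - 4*a*l^2 := by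
      rw [hdenom]; positivity
    refine ⟨aux_mem θ r a l ha hl0 hD, ?_⟩
    have harg : θ*a^2*l^2/(θ - 8*r - 4*a*l^2) = γ^2 := by
      rw [hdenom, hlsq]
      have hEne : (θ*a^2 + 4*a*γ^2) ≠ 0 := ne_of_gt hEpos
      field_simp
    rw [gamLam, harg, Real.sqrt_sq hγ.le]
  · -- part 3
    intro l hl
    have hl0 : l < 0 := hl.2
    have hlne : l ≠ 0 := ne_of_lt hl0
    have hD : 0 < θ - 8*r - 4*a*l^2 := aux_hD θ r a l ha hl
    set g := gamLam θ r a l with hgdef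
    have hargpos : 0 < θ*a^2*l^2/(θ - 8*r - 4*a*l^2) := by positivity
    have hgpos : 0 < g := Real.sqrt_pos.mpr hargpos
    have hgsq : g^2 = θ*a^2*l^2/(θ - 8*r - 4*a*l^2) := Real.sq_sqrt hargpos.le
    refine ⟨hgpos, ?_⟩
    have hinner : (θ - 8*r)/(θ*a^2 + 4*a*g^2) = (θ - 8*r - 4*a*l^2)/(θ*a^2) := by
      rw [hgsq]
      have hDu : (θ - 8*r - 4*a*l^2) * (θ - 8*r - 4*a*l^2)⁻¹ = 1 := mul_inv_cancel₀ hD.ne'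
      rw [div_eq_div_iff (add_pos (by positivity) (mul_pos (by positivity) hargpos)).ne' (mul_pos hθ0 (by positivity)).ne']
      linear_combination (-4*θ*a^3*l^2) * hDu
    rw [lamGamma, hinner]
    have h2 : g * Real.sqrt ((θ - 8*r - 4*a*l^2)/(θ*a^2)) =
        Real.sqrt (θ*a^2*l^2/(θ - 8*r - 4*a*l^2) * ((θ - 8*r - 4*a*l^2)/(θ*a^2))) := by
      rw [hgdef, gamLam, ← Real.sqrt_mul hargpos.le]
    have h3 : θ*a^2*l^2/(θ - 8*r - 4*a*l^2) * ((θ - 8*r - 4*a*l^2)/(θ*a^2)) = l^2 := by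
      rw [div_mul_div_comm, div_eq_iff (mul_ne_zero hD.ne' (mul_pos hθ0 (by positivity)).ne')]; ring
    rw [neg_mul, h2, h3, Real.sqrt_sq_eq_abs, abs_of_neg hl0, neg_neg]
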